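/- Consider the equivalence relation on symmetric 2×2 complex matrices defined by B ∼ B' if and only if there exists an invertible 2×2 complex matrix d that is either diagonal or antidiagonal such that B' = dᵀ·B·d. Then the set of equivalence classes of this relation is infinite. -/
import Mathlib

private noncomputable def matInv (B : Matrix (Fin 2) (Fin 2) ℂ) : ℂ :=
  B 0 0 * B 1 1 / (B 0 1) ^ 2

private lemma matInv_congr (B B' : Matrix (Fin 2) (Fin 2) ℂ) (hB : B.IsSymm)
    (d : Matrix (Fin 2) (Fin 2) ℂ)
    (hd : (d 0 1 = 0 ∧ d 1 0 = 0 ∧ d 0 0 ≠ 0 ∧ d 1 1 ≠ 0) ∨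
          (d 0 0 = 0 ∧ d 1 1 = 0 ∧ d 0 1 ≠ 0 ∧ d 1 0 ≠ 0))
    (h : B' = d.transpose * B * d) : matInv B' = matInv B := by
  have hsym : B 1 0 = B 0 1 := by
    have := congrArg (fun M => M 0 1) hB
    simpa [Matrix.transpose_apply] using this
  have h00 : B' 0 0 = (d 0 0 * B 0 0 + d 1 0 * B 1 0) * d 0 0
      + (d 0 0 * B 0 1 + d 1 0 * B 1 1) * d 1 0 := by
    rw [h]; simp [Matrix.mul_apply, Fin.sum_univ_two, Matrix.transpose_apply]
  have h11 : B' 1 1 = (d 0 1 * B 0 0 + d 1 1 * B 1 0) * d 0 1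
      + (d 0 1 * B 0 1 + d 1 1 * B 1 1) * d 1 1 := by
    rw [h]; simp [Matrix.mul_apply, Fin.sum_univ_two, Matrix.transpose_apply]
  have h01 : B' 0 1 = (d 0 0 * B 0 0 + d 1 0 * B 1 0) * d 0 1
      + (d 0 0 * B 0 1 + d 1 0 * B 1 1) * d 1 1 := by
    rw [h]; simp [Matrix.mul_apply, Fin.sum_univ_two, Matrix.transpose_apply]
  rcases hd with ⟨h01d, h10d, ha, hb⟩ | ⟨h00d, h11d, hc, he⟩
  · have hab : (d 0 0 * d 1 1) ^ 2 ≠ 0 := pow_ne_zero _ (mul_ne_zero ha hb)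
    unfold matInv
    rw [h00, h11, h01, h01d, h10d]
    calc ((d 0 0 * B 0 0 + 0 * B 1 0) * d 0 0 + (d 0 0 * B 0 1 + 0 * B 1 1) * 0) *
          ((0 * B 0 0 + d 1 1 * B 1 0) * 0 + (0 * B 0 1 + d 1 1 * B 1 1) * d 1 1) /
          ((d 0 0 * B 0 0 + 0 * B 1 0) * 0 + (d 0 0 * B 0 1 + 0 * B 1 1) * d 1 1) ^ 2
        = (d 0 0 * d 1 1) ^ 2 * (B 0 0 * B 1 1) / ((d 0 0 * d 1 1) ^ 2 * B 0 1 ^ 2) := by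
          ring_nf
      _ = B 0 0 * B 1 1 / B 0 1 ^ 2 := mul_div_mul_left _ _ hab
  · have hce : (d 0 1 * d 1 0) ^ 2 ≠ 0 := pow_ne_zero _ (mul_ne_zero hc he)
    unfold matInv
    rw [h00, h11, h01, h00d, h11d, hsym]
    calc ((0 * B 0 0 + d 1 0 * B 0 1) * 0 + (0 * B 0 1 + d 1 0 * B 1 1) * d 1 0) *
          ((d 0 1 * B 0 0 + 0 * B 0 1) * d 0 1 + (d 0 1 * B 0 1 + 0 * B 1 1) * 0) /
          ((0 * B 0 0 + d 1 0 * B 0 1) * d 0 1 + (0 * B 0 1 + d 1 0 * B 1 1) * 0) ^ 2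
        = (d 0 1 * d 1 0) ^ 2 * (B 0 0 * B 1 1) / ((d 0 1 * d 1 0) ^ 2 * B 0 1 ^ 2) := by
          ring_nf
      _ = B 0 0 * B 1 1 / B 0 1 ^ 2 := mul_div_mul_left _ _ hce

/-- Consider the equivalence relation on symmetric `2 × 2` complex matrices given by
`B ∼ B'` iff `B' = dᵀ·B·d` for some invertible matrix `d` that is either diagonal
(nonzero diagonal entries) or antidiagonal (zero diagonal entries, nonzero antidiagonal
entries). The set of equivalence classes of this relation is infinite. -/
theorem infinite_congruence_classes_symm_matrices :
    Infinite (Quot (fun B B' : {M : Matrix (Fin 2) (Fin 2) ℂ // M.IsSymm} =>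
      ∃ d : Matrix (Fin 2) (Fin 2) ℂ,
        ((d 0 1 = 0 ∧ d 1 0 = 0 ∧ d 0 0 ≠ 0 ∧ d 1 1 ≠ 0) ∨
         (d 0 0 = 0 ∧ d 1 1 = 0 ∧ d 0 1 ≠ 0 ∧ d 1 0 ≠ 0)) ∧
        B'.1 = d.transpose * B.1 * d)) := by
  set r := (fun B B' : {M : Matrix (Fin 2) (Fin 2) ℂ // M.IsSymm} =>
      ∃ d : Matrix (Fin 2) (Fin 2) ℂ,
        ((d 0 1 = 0 ∧ d 1 0 = 0 ∧ d 0 0 ≠ 0 ∧ d 1 1 ≠ 0) ∨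
         (d 0 0 = 0 ∧ d 1 1 = 0 ∧ d 0 1 ≠ 0 ∧ d 1 0 ≠ 0)) ∧
        B'.1 = d.transpose * B.1 * d) with hr
  have hlift : ∀ a b : {M : Matrix (Fin 2) (Fin 2) ℂ // M.IsSymm},
      r a b → matInv a.1 = matInv b.1 := by
    rintro a b ⟨d, hd, h⟩
    exact (matInv_congr a.1 b.1 a.2 d hd h).symm
  let F : Quot r → ℂ := Quot.lift (fun B => matInv B.1) hlift
  let Bn : ℕ → {M : Matrix (Fin 2) (Fin 2) ℂ // M.IsSymm} := fun n =>
    ⟨!![(n : ℂ), 1; 1, 1], by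
      ext i j
      fin_cases i <;> fin_cases j <;> simp [Matrix.transpose_apply]⟩
  have hF : ∀ n : ℕ, F (Quot.mk r (Bn n)) = (n : ℂ) := by
    intro n
    show matInv (Bn n).1 = (n : ℂ)
    simp [matInv, Bn]
  refine Infinite.of_injective (fun n => Quot.mk r (Bn n)) ?_
  intro m n h
  have : (m : ℂ) = (n : ℂ) := by rw [← hF m, ← hF n]; exact congrArg F h
  exact_mod_cast this
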